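/- arXiv:1109.2808 — 3 statements merged into one kernel-verified Lean document; each statement's English description precedes it below -/
import Mathlib

section
/- Let N ≥ 2 and 1 < q < 2, and set C₄(q) = (q−1)^{(q−2)/(q−1)} · (2−q)^{−1}. Let Ω ⊆ ℝ^N be a bounded open set with 0 ∈ ∂Ω. Suppose u is continuous on (closure of Ω) \ {0}, twice continuously differentiable on Ω, satisfies Δu(x) = ‖∇u(x)‖^q for all x ∈ Ω, and u(x) = 0 for all x ∈ ∂Ω \ {0}. Then u(x) ≤ C₄(q) · ‖x‖^{(q−2)/(q−1)} for every x ∈ Ω. -/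
open Metric Set

/-- The Laplacian of `u : ℝ^N → ℝ`, as the sum of the second partial derivatives. -/
noncomputable def lap {N : ℕ} (u : EuclideanSpace ℝ (Fin N) → ℝ)
    (x : EuclideanSpace ℝ (Fin N)) : ℝ :=
  ∑ i : Fin N, fderiv ℝ (fun y => fderiv ℝ u y (EuclideanSpace.single i 1)) x
    (EuclideanSpace.single i 1)

/-!
With `β = (q - 2)/(q - 1)` and `C₄ = C₄(q)`, the profile `φ(r) = C₄ (r - δ)^β` solves
`φ'' = |φ'|^q` on `r > δ`. The radial Laplacian of `x ↦ φ ‖x‖` is `φ'' + (N - 1) φ' / r`, and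
`φ' < 0`, so this barrier is a strict supersolution of `Δw = |∇w|^q` on `{‖x‖ > δ}` when
`N ≥ 2`. At an interior maximum of `u - w` the gradients agree and `Δ(u - w) ≤ 0`, which
contradicts strictness; hence `u ≤ w` on any bounded open set on whose frontier `u ≤ w`.
Since the barrier blows up at `‖x‖ = δ`, it dominates `u` on `closure Ω ∩ {‖x‖ = ρ}` for `ρ`
close to `δ`, and it is positive where `u = 0` on `frontier Ω`. Comparing on
`Ω ∩ {‖x‖ > ρ}` gives `u(x) ≤ C₄ (‖x‖ - δ)^β`, and the bound follows as `δ → 0`.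
-/

open Filter Topology

theorem IsLocalMax.deriv_deriv_nonpos {f : ℝ → ℝ} {a : ℝ} (h : IsLocalMax f a)
    (hc : ContinuousAt f a) : deriv (deriv f) a ≤ 0 := by
  -- if `f'' a > 0`, then `a` is also a local minimum, so `f` is locally constant and `f'' a = 0`
  by_contra! hpos
  have hmin : IsLocalMin f a := isLocalMin_of_deriv_deriv_pos hpos h.deriv_eq_zero hc
  have hconst : f =ᶠ[𝓝 a] fun _ => f a := (hmin.and h).mono fun x hx => le_antisymm hx.2 hx.1
  have : deriv (deriv f) a = 0 := by
    rw [hconst.deriv.deriv_eq]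
    simp
  exact hpos.ne' this

section SecondDerivative

variable {E : Type*} [NormedAddCommGroup E] [NormedSpace ℝ E] {f : E → ℝ} {x : E}

theorem IsLocalMax.fderiv_fderiv_apply_nonpos (h : IsLocalMax f x) {e : E}
    (hf : ∀ᶠ y in 𝓝 x, DifferentiableAt ℝ f y)
    (hf' : DifferentiableAt ℝ (fun y => fderiv ℝ f y e) x) :
    fderiv ℝ (fun y => fderiv ℝ f y e) x e ≤ 0 := by
  have hline : ∀ t : ℝ, HasDerivAt (fun t : ℝ => x + t • e) e t := fun t => by
    simpa using ((hasDerivAt_id t).smul_const e).const_add x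
  have hline0 : Tendsto (fun t : ℝ => x + t • e) (𝓝 0) (𝓝 x) := by
    simpa using (hline 0).continuousAt.tendsto
  have hderiv :
      deriv (fun t : ℝ => f (x + t • e)) =ᶠ[𝓝 (0 : ℝ)] fun t => fderiv ℝ f (x + t • e) e :=
    (hline0.eventually hf).mono fun t ht => (ht.hasFDerivAt.comp_hasDerivAt t (hline t)).deriv
  have hderiv2 : deriv (deriv fun t : ℝ => f (x + t • e)) 0 =
      fderiv ℝ (fun y => fderiv ℝ f y e) x e := by
    rw [hderiv.deriv_eq]
    exact (hf'.hasFDerivAt.comp_hasDerivAt_of_eq 0 (hline 0) (by simp)).deriv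
  rw [← hderiv2]
  refine IsLocalMax.deriv_deriv_nonpos ?_ ?_
  · simpa [IsLocalMax, IsMaxFilter] using hline0.eventually h
  · exact (hf.self_of_nhds.continuousAt.comp_of_eq (hline 0).continuousAt (by simp))

theorem ContDiffAt.eventually_differentiableAt (hf : ContDiffAt ℝ 2 f x) :
    ∀ᶠ y in 𝓝 x, DifferentiableAt ℝ f y :=
  (hf.eventually (by simp)).mono fun _ hy => hy.differentiableAt two_ne_zero

theorem ContDiffAt.differentiableAt_fderiv_apply (hf : ContDiffAt ℝ 2 f x) {e : E} :
    DifferentiableAt ℝ (fun y => fderiv ℝ f y e) x :=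
  ((hf.fderiv_right (m := 1) le_rfl).differentiableAt one_ne_zero).clm_apply
    (differentiableAt_const e)

end SecondDerivative

theorem IsOpen.exists_isLocalMax_of_frontier_nonpos {X : Type*} [PseudoMetricSpace X]
    [ProperSpace X] {s : Set X} {f : X → ℝ} (hs : IsOpen s) (hsb : Bornology.IsBounded s)
    (hf : ContinuousOn f (closure s)) (hfr : ∀ y ∈ frontier s, f y ≤ 0) {z : X} (hz : z ∈ s)
    (hfz : 0 < f z) : ∃ y ∈ s, IsLocalMax f y := by
  obtain ⟨y, hy, hmax⟩ := (isCompact_of_isClosed_isBounded isClosed_closure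
    hsb.closure).exists_isMaxOn ⟨z, subset_closure hz⟩ hf
  have hys : y ∈ s := by
    by_contra hys
    have := hfr y ⟨hy, by rwa [hs.interior_eq]⟩
    linarith [isMaxOn_iff.mp hmax z (subset_closure hz)]
  exact ⟨y, hys, hmax.isLocalMax (mem_of_superset (hs.mem_nhds hys) subset_closure)⟩

section Radial

variable {F : Type*} [NormedAddCommGroup F] [InnerProductSpace ℝ F] {x : F}

theorem hasFDerivAt_norm (hx : x ≠ 0) : HasFDerivAt (‖·‖) (‖x‖⁻¹ • innerSL ℝ x) x := by
  have hx' : 0 < ‖x‖ := norm_pos_iff.2 hx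
  have h := (Real.hasDerivAt_sqrt (pow_pos hx' 2).ne').comp_hasFDerivAt x
    (hasStrictFDerivAt_norm_sq x).hasFDerivAt
  have hsqrt : (fun y : F => ‖y‖) = fun y => √(‖y‖ ^ 2) :=
    funext fun y => (Real.sqrt_sq (norm_nonneg y)).symm
  rw [hsqrt]
  refine h.congr_fderiv ?_
  ext v
  simp only [Real.sqrt_sq hx'.le, smul_apply, coe_innerSL_apply,
    nsmul_eq_mul, Nat.cast_ofNat, smul_eq_mul]
  field_simp

theorem HasDerivAt.hasFDerivAt_comp_norm {φ : ℝ → ℝ} {φ' : ℝ} (hφ : HasDerivAt φ φ' ‖x‖)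
    (hx : x ≠ 0) : HasFDerivAt (fun y => φ ‖y‖) ((φ' * ‖x‖⁻¹) • innerSL ℝ x) x :=
  (hφ.comp_hasFDerivAt x (hasFDerivAt_norm hx)).congr_fderiv (by rw [smul_smul])

theorem HasDerivAt.norm_gradient_comp_norm [CompleteSpace F] {φ : ℝ → ℝ} {φ' : ℝ}
    (hφ : HasDerivAt φ φ' ‖x‖) (hx : x ≠ 0) : ‖gradient (fun y => φ ‖y‖) x‖ = |φ'| := by
  rw [gradient, LinearIsometryEquiv.norm_map, (hφ.hasFDerivAt_comp_norm hx).fderiv, norm_smul,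
    innerSL_apply_norm, norm_mul, norm_inv, norm_norm, Real.norm_eq_abs,
    inv_mul_cancel_right₀ (norm_ne_zero_iff.2 hx)]

end Radial

section Laplacian

variable {N : ℕ} {f u w : EuclideanSpace ℝ (Fin N) → ℝ} {x y : EuclideanSpace ℝ (Fin N)}

theorem lap_nonpos_of_isLocalMax (hf : ContDiffAt ℝ 2 f x) (h : IsLocalMax f x) : lap f x ≤ 0 :=
  Finset.sum_nonpos fun _ _ =>
    h.fderiv_fderiv_apply_nonpos hf.eventually_differentiableAt hf.differentiableAt_fderiv_apply

theorem lap_sub (hu : ContDiffAt ℝ 2 u x) (hw : ContDiffAt ℝ 2 w x) :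
    lap (u - w) x = lap u x - lap w x := by
  rw [lap, lap, lap, ← Finset.sum_sub_distrib]
  refine Finset.sum_congr rfl fun i _ => ?_
  have hev : (fun y => fderiv ℝ (u - w) y (EuclideanSpace.single i 1)) =ᶠ[𝓝 x]
      fun y => fderiv ℝ u y (EuclideanSpace.single i 1) -
        fderiv ℝ w y (EuclideanSpace.single i 1) := by
    filter_upwards [hu.eventually_differentiableAt, hw.eventually_differentiableAt]
      with y hu hw
    rw [fderiv_sub hu hw]
    rfl
  rw [hev.fderiv_eq, fderiv_fun_sub hu.differentiableAt_fderiv_apply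
    hw.differentiableAt_fderiv_apply]
  rfl

theorem le_of_frontier_le_of_lap_lt {E : Set (EuclideanSpace ℝ (Fin N))}
    {H : EuclideanSpace ℝ (Fin N) → ℝ} (hEo : IsOpen E) (hEb : Bornology.IsBounded E)
    (hu : ContDiffOn ℝ 2 u E) (hw : ContDiffOn ℝ 2 w E)
    (hcu : ContinuousOn u (closure E)) (hcw : ContinuousOn w (closure E))
    (hsub : ∀ y ∈ E, H (gradient u y) ≤ lap u y)
    (hsuper : ∀ y ∈ E, lap w y < H (gradient w y))
    (hfr : ∀ y ∈ frontier E, u y ≤ w y) (hx : x ∈ E) : u x ≤ w x := by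
  by_contra! hlt
  obtain ⟨y, hy, hmax⟩ := hEo.exists_isLocalMax_of_frontier_nonpos hEb (hcu.sub hcw)
    (fun y hy => sub_nonpos.2 (hfr y hy)) hx (sub_pos.2 hlt)
  have hu2 := hu.contDiffAt (hEo.mem_nhds hy)
  have hw2 := hw.contDiffAt (hEo.mem_nhds hy)
  have hgrad : gradient u y = gradient w y := by
    have h := hmax.fderiv_eq_zero
    rw [fderiv_sub (hu2.differentiableAt two_ne_zero) (hw2.differentiableAt two_ne_zero),
      sub_eq_zero] at h
    simp [gradient, h]
  have hlap : lap u y ≤ lap w y := by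
    linarith [lap_sub hu2 hw2, lap_nonpos_of_isLocalMax (f := u - w) (hu2.sub hw2) hmax]
  have hHu := hsub y hy
  rw [hgrad] at hHu
  linarith [hsuper y hy]

theorem lap_comp_norm {φ φ' : ℝ → ℝ} {φ'' : ℝ} (hy : y ≠ 0)
    (hφ : ∀ᶠ r in 𝓝 ‖y‖, HasDerivAt φ (φ' r) r) (hφ' : HasDerivAt φ' φ'' ‖y‖) :
    lap (fun x => φ ‖x‖) y = φ'' + (N - 1) / ‖y‖ * φ' ‖y‖ := by
  have hr : ‖y‖ ≠ 0 := norm_ne_zero_iff.2 hy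
  have hψ : HasDerivAt (fun r => φ' r * r⁻¹) (φ'' * ‖y‖⁻¹ + φ' ‖y‖ * -(‖y‖ ^ 2)⁻¹) ‖y‖ :=
    hφ'.mul (hasDerivAt_inv hr)
  have hterm : ∀ i : Fin N,
      fderiv ℝ (fun x => fderiv ℝ (fun x => φ ‖x‖) x (EuclideanSpace.single i 1)) y
        (EuclideanSpace.single i 1) =
      φ' ‖y‖ * ‖y‖⁻¹ + (φ'' * ‖y‖⁻¹ + φ' ‖y‖ * -(‖y‖ ^ 2)⁻¹) * ‖y‖⁻¹ * y i ^ 2 := by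
    intro i
    set e : EuclideanSpace ℝ (Fin N) := EuclideanSpace.single i 1
    have hev : (fun x => fderiv ℝ (fun x => φ ‖x‖) x e) =ᶠ[𝓝 y]
        fun x => φ' ‖x‖ * ‖x‖⁻¹ * innerSL ℝ e x := by
      filter_upwards [(continuous_norm.tendsto y).eventually hφ, isOpen_ne.mem_nhds hy]
        with x hφx hx
      simp [(hφx.hasFDerivAt_comp_norm hx).fderiv, real_inner_comm, mul_assoc]
    rw [hev.fderiv_eq, ((hψ.hasFDerivAt_comp_norm hy).fun_mul (innerSL ℝ e).hasFDerivAt).fderiv]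
    simp only [add_apply, smul_apply, coe_innerSL_apply,
      smul_eq_mul, e, EuclideanSpace.inner_single_left, EuclideanSpace.inner_single_right,
      PiLp.single_apply, ↓reduceIte, Real.ringHom_apply]
    ring
  rw [lap, Finset.sum_congr rfl fun i _ => hterm i, Finset.sum_add_distrib, Finset.sum_const,
    ← Finset.mul_sum, ← EuclideanSpace.real_norm_sq_eq, Finset.card_univ, Fintype.card_fin]
  field_simp
  linear_combination (N * φ' ‖y‖) * mul_inv_cancel₀ hr

end Laplacian

theorem hasDerivAt_mul_sub_rpow (c p : ℝ) {δ r : ℝ} (hr : δ < r) :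
    HasDerivAt (fun r => c * (r - δ) ^ p) (c * p * (r - δ) ^ (p - 1)) r := by
  simpa [mul_assoc] using (((hasDerivAt_id r).sub_const δ).rpow_const
    (Or.inl (sub_pos.2 hr).ne')).const_mul c

noncomputable section

def barrierExp (q : ℝ) : ℝ := (q - 2) / (q - 1)

def barrierConst (q : ℝ) : ℝ := (q - 1) ^ barrierExp q * (2 - q)⁻¹

def barrier (q δ r : ℝ) : ℝ := barrierConst q * (r - δ) ^ barrierExp q

end

section Barrier

variable {q : ℝ}

theorem barrierExp_sub_one_mul (hq : q ≠ 1) : (barrierExp q - 1) * q = barrierExp q - 2 := by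
  have : q - 1 ≠ 0 := sub_ne_zero.2 hq
  unfold barrierExp
  field_simp
  ring

theorem barrierConst_mul_barrierExp (hq1 : 1 < q) (hq2 : q ≠ 2) :
    barrierConst q * barrierExp q = -(q - 1) ^ (barrierExp q - 1) := by
  have h1 : 0 < q - 1 := sub_pos.2 hq1
  have h2 : 2 - q ≠ 0 := sub_ne_zero.2 hq2.symm
  rw [barrierConst, Real.rpow_sub_one h1.ne', barrierExp]
  field_simp
  ring

theorem barrierExp_neg (hq1 : 1 < q) (hq2 : q < 2) : barrierExp q < 0 :=
  div_neg_of_neg_of_pos (by linarith) (by linarith)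

theorem barrierConst_pos (hq1 : 1 < q) (hq2 : q < 2) : 0 < barrierConst q := by
  have : 0 < q - 1 := sub_pos.2 hq1
  have : 0 < 2 - q := sub_pos.2 hq2
  unfold barrierConst
  positivity

/-- The profile `barrier q δ` solves the one-dimensional equation `φ'' = |φ'| ^ q`. -/
theorem barrier_ode (hq1 : 1 < q) (hq2 : q ≠ 2) {t : ℝ} (ht : 0 < t) :
    barrierConst q * barrierExp q * (barrierExp q - 1) * t ^ (barrierExp q - 2) =
      |barrierConst q * barrierExp q * t ^ (barrierExp q - 1)| ^ q := by
  have h1 : 0 < q - 1 := sub_pos.2 hq1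
  have hβ : barrierExp q - 1 = -(q - 1)⁻¹ := by
    rw [barrierExp]; field_simp; ring
  have hpow : (q - 1) ^ (barrierExp q - 2) = (q - 1) ^ (barrierExp q - 1) * (q - 1)⁻¹ := by
    rw [show barrierExp q - 2 = barrierExp q - 1 + -1 by ring, Real.rpow_add h1, Real.rpow_neg_one]
  rw [barrierConst_mul_barrierExp hq1 hq2, abs_mul, abs_neg, abs_of_pos (by positivity),
    abs_of_pos (by positivity),
    Real.mul_rpow (by positivity) (by positivity), ← Real.rpow_mul h1.le, ← Real.rpow_mul ht.le,
    barrierExp_sub_one_mul hq1.ne', hpow]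
  linear_combination (-(q - 1) ^ (barrierExp q - 1) * t ^ (barrierExp q - 2)) * hβ

theorem barrier_pos (hq1 : 1 < q) (hq2 : q < 2) {δ r : ℝ} (hr : δ < r) : 0 < barrier q δ r :=
  mul_pos (barrierConst_pos hq1 hq2) (Real.rpow_pos_of_pos (sub_pos.2 hr) _)

theorem tendsto_barrier_atTop (hq1 : 1 < q) (hq2 : q < 2) (δ : ℝ) :
    Tendsto (barrier q δ) (𝓝[>] δ) atTop := by
  have h : Tendsto (fun r => r - δ) (𝓝[>] δ) (𝓝[>] 0) :=
    tendsto_nhdsWithin_iff.2 ⟨((continuous_sub_right δ).tendsto' δ 0 (sub_self δ)).mono_left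
      nhdsWithin_le_nhds, eventually_nhdsWithin_of_forall fun r (hr : δ < r) => sub_pos.2 hr⟩
  exact ((tendsto_rpow_neg_nhdsGT_zero (barrierExp_neg hq1 hq2)).comp h).const_mul_atTop
    (barrierConst_pos hq1 hq2)

variable {N : ℕ} {δ : ℝ}

theorem contDiffAt_barrier_norm {y : EuclideanSpace ℝ (Fin N)} (hδ : 0 ≤ δ) (hy : δ < ‖y‖) :
    ContDiffAt ℝ 2 (fun x => barrier q δ ‖x‖) y := by
  have hy0 : y ≠ 0 := norm_pos_iff.1 (hδ.trans_lt hy)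
  exact (((contDiffAt_norm ℝ hy0).sub contDiffAt_const).rpow_const_of_ne
    (sub_pos.2 hy).ne').const_smul (barrierConst q)

theorem lap_barrier_norm_lt (hN : 2 ≤ N) (hq1 : 1 < q) (hq2 : q ≠ 2)
    {y : EuclideanSpace ℝ (Fin N)} (hδ : 0 ≤ δ) (hy : δ < ‖y‖) :
    lap (fun x => barrier q δ ‖x‖) y < ‖gradient (fun x => barrier q δ ‖x‖) y‖ ^ q := by
  have hy0 : y ≠ 0 := norm_pos_iff.1 (hδ.trans_lt hy)
  set c := barrierConst q
  set β := barrierExp q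
  have hφ : ∀ᶠ r in 𝓝 ‖y‖, HasDerivAt (barrier q δ) (c * β * (r - δ) ^ (β - 1)) r :=
    eventually_of_mem (Ioi_mem_nhds hy) fun r hr => hasDerivAt_mul_sub_rpow c β hr
  have hφ' : HasDerivAt (fun r => c * β * (r - δ) ^ (β - 1))
      (c * β * (β - 1) * (‖y‖ - δ) ^ (β - 2)) ‖y‖ := by
    convert hasDerivAt_mul_sub_rpow (c * β) (β - 1) hy using 2
    ring_nf
  have hslope : c * β * (‖y‖ - δ) ^ (β - 1) < 0 := by
    have := sub_pos.2 hq1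
    have := sub_pos.2 hy
    rw [barrierConst_mul_barrierExp hq1 hq2, neg_mul, neg_lt_zero]
    positivity
  have hN' : 0 < ((N : ℝ) - 1) / ‖y‖ := by
    have : (2 : ℝ) ≤ N := by exact_mod_cast hN
    exact div_pos (by linarith) (hδ.trans_lt hy)
  rw [lap_comp_norm hy0 hφ hφ', hφ.self_of_nhds.norm_gradient_comp_norm hy0,
    ← barrier_ode hq1 hq2 (sub_pos.2 hy)]
  nlinarith

theorem le_barrier_norm (hN : 2 ≤ N) (hq1 : 1 < q) (hq2 : q < 2)
    {Ω : Set (EuclideanSpace ℝ (Fin N))} (hΩo : IsOpen Ω) (hΩb : Bornology.IsBounded Ω)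
    {u : EuclideanSpace ℝ (Fin N) → ℝ} (hcont : ContinuousOn u (closure Ω \ {0}))
    (hC2 : ContDiffOn ℝ 2 u Ω) (hsub : ∀ x ∈ Ω, ‖gradient u x‖ ^ q ≤ lap u x)
    (hbd : ∀ x ∈ frontier Ω, x ≠ 0 → u x ≤ 0) (hδ : 0 < δ) {x : EuclideanSpace ℝ (Fin N)}
    (hx : x ∈ Ω) (hδx : δ < ‖x‖) :
    u x ≤ barrier q δ ‖x‖ := by
  have hK : ∀ {ρ : ℝ}, 0 < ρ → closure Ω ∩ {y | ρ ≤ ‖y‖} ⊆ closure Ω \ {0} :=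
    fun hρ y hy => ⟨hy.1, norm_pos_iff.1 (hρ.trans_le hy.2)⟩
  obtain ⟨M, hM⟩ : BddAbove (u '' (closure Ω ∩ {y | δ ≤ ‖y‖})) :=
    ((isCompact_of_isClosed_isBounded isClosed_closure hΩb.closure).inter_right
      (isClosed_le continuous_const continuous_norm)).bddAbove_image (hcont.mono (hK hδ))
  obtain ⟨ρ, hMρ, hρ⟩ := (((tendsto_barrier_atTop hq1 hq2 δ).eventually_ge_atTop M).and
    (Ioo_mem_nhdsGT hδx)).exists
  set E := Ω ∩ {y | ρ < ‖y‖}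
  have hclE : closure E ⊆ closure Ω ∩ {y | ρ ≤ ‖y‖} :=
    (closure_inter_subset_inter_closure _ _).trans
      (inter_subset_inter_right _ (closure_lt_subset_le continuous_const continuous_norm))
  have hδE : ∀ y ∈ closure E, δ < ‖y‖ := fun y hy => hρ.1.trans_le (hclE hy).2
  have hfr : ∀ y ∈ frontier E, u y ≤ barrier q δ ‖y‖ := by
    intro y hy
    rcases frontier_inter_subset Ω {y | ρ < ‖y‖} hy with ⟨hyΩ, hyρ⟩ | ⟨hyΩ, hyρ⟩
    · have hyρ : ρ ≤ ‖y‖ := closure_lt_subset_le continuous_const continuous_norm hyρ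
      exact (hbd y hyΩ (norm_pos_iff.1 (hδ.trans (hρ.1.trans_le hyρ)))).trans
        (barrier_pos hq1 hq2 (hρ.1.trans_le hyρ)).le
    · have hyρ : ρ = ‖y‖ := frontier_lt_subset_eq continuous_const continuous_norm hyρ
      calc u y ≤ M := hM ⟨y, ⟨hyΩ, (hyρ ▸ hρ.1.le : δ ≤ ‖y‖)⟩, rfl⟩
        _ ≤ barrier q δ ‖y‖ := hyρ ▸ hMρ
  exact le_of_frontier_le_of_lap_lt (H := fun v => ‖v‖ ^ q)
    (hΩo.inter (isOpen_lt continuous_const continuous_norm)) (hΩb.subset inter_subset_left)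
    (hC2.mono inter_subset_left)
    (fun y hy => (contDiffAt_barrier_norm hδ.le (hδE y (subset_closure hy))).contDiffWithinAt)
    (hcont.mono (hclE.trans (hK (hδ.trans hρ.1))))
    (fun y hy => (contDiffAt_barrier_norm hδ.le (hδE y hy)).continuousAt.continuousWithinAt)
    (fun y hy => hsub y hy.1)
    (fun y hy => lap_barrier_norm_lt hN hq1 hq2.ne hδ.le (hδE y (subset_closure hy)))
    hfr ⟨hx, hρ.2⟩

end Barrier

/-- Upper bound for a solution of `−Δu + |∇u|^q = 0` (`1 < q < 2`) in a bounded open set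
with `0 ∈ ∂Ω`, vanishing on `∂Ω \ {0}`:
`u(x) ≤ C₄(q) ‖x‖^{(q−2)/(q−1)}` with `C₄(q) = (q−1)^{(q−2)/(q−1)} (2−q)^{-1}`. -/
theorem upper_bound_isolated_singularity
    (N : ℕ) (hN : 2 ≤ N) (q : ℝ) (hq1 : 1 < q) (hq2 : q < 2)
    (Ω : Set (EuclideanSpace ℝ (Fin N))) (hΩo : IsOpen Ω) (hΩb : Bornology.IsBounded Ω)
    (h0 : (0 : EuclideanSpace ℝ (Fin N)) ∈ frontier Ω)
    (u : EuclideanSpace ℝ (Fin N) → ℝ)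
    (hcont : ContinuousOn u (closure Ω \ {0}))
    (hC2 : ContDiffOn ℝ 2 u Ω)
    (heq : ∀ x ∈ Ω, lap u x = ‖gradient u x‖ ^ q)
    (hbd : ∀ x ∈ frontier Ω, x ≠ 0 → u x = 0) :
    ∀ x ∈ Ω,
      u x ≤ (q - 1) ^ ((q - 2) / (q - 1)) * (2 - q)⁻¹ * ‖x‖ ^ ((q - 2) / (q - 1)) := by
  intro x hx
  have hx0 : 0 < ‖x‖ := norm_pos_iff.2 <| by rintro rfl; exact (hΩo.frontier_eq ▸ h0).2 hx
  have hlim : Tendsto (fun δ => barrier q δ ‖x‖) (𝓝[>] 0) (𝓝 (barrier q 0 ‖x‖)) := by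
    refine ContinuousAt.tendsto ?_ |>.mono_left nhdsWithin_le_nhds
    exact ((continuous_const.sub continuous_id).continuousAt.rpow_const
      (Or.inl (by simpa using hx0.ne'))).const_mul _
  have hle : ∀ᶠ δ in 𝓝[>] 0, u x ≤ barrier q δ ‖x‖ :=
    eventually_of_mem (Ioo_mem_nhdsGT hx0) fun δ hδ =>
      le_barrier_norm hN hq1 hq2 hΩo hΩb hcont hC2 (fun y hy => (heq y hy).ge)
        (fun y hy hy0 => (hbd y hy hy0).le) hδ.1 hx hδ.2
  simpa [barrier, barrierConst, barrierExp] using ge_of_tendsto hlim hle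
end

section
/- Let N ≥ 2 and 1 < q < 2. Let ω ∈ ℝ^N, 0 < τ < r′, B ∈ ℝ, and let A > 0 satisfy 1/(q−1) − 1 + N + (N−1)·r′/τ ≤ ( (2−q)·A/(q−1) )^{q−1}. Define v on the annulus A(ω) = {y ∈ ℝ^N : τ < ‖y − ω‖ < r′} by v(y) = A · (r′ − ‖y − ω‖)^{(q−2)/(q−1)} − B. Then v is twice continuously differentiable on A(ω) and −Δv(y) + ‖∇v(y)‖^q ≥ 0 for every y ∈ A(ω) (the local barrier used for tangential boundary estimates). -/
/-!
For a radial function `v y = φ ‖y - ω‖` one has `∇v = φ'(r) (y - ω) / r` and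
`Δv = φ''(r) + (N - 1) φ'(r) / r`. For `φ t = A (r' - t) ^ α - B` with `α = (q - 2) / (q - 1)`,
put `C = (2 - q) A / (q - 1)` and `X = r' - r`; then `φ' = C X ^ (α - 1)`, and since
`(α - 1) q = α - 2` the residual `-Δv + |∇v| ^ q` equals
`C X ^ (α - 2) (C ^ (q - 1) - 1 / (q - 1) - (N - 1) X / r)`, which is nonnegative by the
hypothesis on `A` because `X / r ≤ r' / τ`.
-/

open Metric Set

open Filter Topology

section Radial

variable {E : Type*} [NormedAddCommGroup E] [InnerProductSpace ℝ E]

theorem hasFDerivAt_norm_sub {y ω : E} (h : y ≠ ω) :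
    HasFDerivAt (fun z => ‖z - ω‖) (‖y - ω‖⁻¹ • innerSL ℝ (y - ω)) y := by
  have hR : ‖y - ω‖ ≠ 0 := norm_ne_zero_iff.2 (sub_ne_zero.2 h)
  have hsq := ((hasFDerivAt_id y).sub_const ω).norm_sq
  have hsqrt := (Real.hasDerivAt_sqrt (pow_ne_zero 2 hR)).comp_hasFDerivAt y hsq
  simp only [Function.comp_def, Real.sqrt_sq (norm_nonneg _)] at hsqrt
  refine hsqrt.congr_fderiv ?_
  ext z
  simp only [one_div, mul_inv_rev, id_eq, map_sub, ContinuousLinearMap.comp_id, smul_apply,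
    sub_apply, coe_innerSL_apply, nsmul_eq_mul, Nat.cast_ofNat, smul_eq_mul]
  ring

theorem HasDerivAt.hasFDerivAt_comp_norm_sub {φ : ℝ → ℝ} {φ' : ℝ} {y ω : E}
    (hφ : HasDerivAt φ φ' ‖y - ω‖) (h : y ≠ ω) :
    HasFDerivAt (fun z => φ ‖z - ω‖) ((φ' / ‖y - ω‖) • innerSL ℝ (y - ω)) y := by
  refine (hφ.comp_hasFDerivAt y (hasFDerivAt_norm_sub h)).congr_fderiv ?_
  rw [smul_smul, div_eq_mul_inv]

theorem HasDerivAt.hasGradientAt_comp_norm_sub [CompleteSpace E] {φ : ℝ → ℝ} {φ' : ℝ}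
    {y ω : E} (hφ : HasDerivAt φ φ' ‖y - ω‖) (h : y ≠ ω) :
    HasGradientAt (fun z => φ ‖z - ω‖) ((φ' / ‖y - ω‖) • (y - ω)) y := by
  rw [hasGradientAt_iff_hasFDerivAt]
  refine (hφ.hasFDerivAt_comp_norm_sub h).congr_fderiv ?_
  rw [map_smul]
  rfl

theorem HasDerivAt.norm_gradient_comp_norm_sub [CompleteSpace E] {φ : ℝ → ℝ} {φ' : ℝ}
    {y ω : E} (hφ : HasDerivAt φ φ' ‖y - ω‖) (h : y ≠ ω) :
    ‖gradient (fun z => φ ‖z - ω‖) y‖ = |φ'| := by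
  have hR : ‖y - ω‖ ≠ 0 := norm_ne_zero_iff.2 (sub_ne_zero.2 h)
  rw [(hφ.hasGradientAt_comp_norm_sub h).gradient, norm_smul, norm_div, Real.norm_eq_abs,
    norm_norm, div_mul_cancel₀ _ hR]

theorem contDiffOn_const_sub_norm_sub_rpow {n : WithTop ℕ∞} (c α : ℝ) (ω : E) :
    ContDiffOn ℝ n (fun y => (c - ‖y - ω‖) ^ α) {y | 0 < ‖y - ω‖ ∧ ‖y - ω‖ < c} :=
  (contDiffOn_const.sub ((contDiffOn_id.sub contDiffOn_const).norm ℝ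
    fun _ hy => norm_pos_iff.1 hy.1)).rpow_const_of_ne fun _ hy => (sub_pos.2 hy.2).ne'

end Radial

section Laplacian

variable {N : ℕ}

theorem hasFDerivAt_coord_sub (ω y : EuclideanSpace ℝ (Fin N)) (i : Fin N) :
    HasFDerivAt (fun z : EuclideanSpace ℝ (Fin N) => (z - ω) i)
      (EuclideanSpace.proj i : EuclideanSpace ℝ (Fin N) →L[ℝ] ℝ) y := by
  simpa using (EuclideanSpace.proj i : EuclideanSpace ℝ (Fin N) →L[ℝ] ℝ).hasFDerivAt.sub_const
    (ω i)

theorem lap_comp_norm_sub {φ φ' : ℝ → ℝ} {φ'' : ℝ} {y ω : EuclideanSpace ℝ (Fin N)}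
    (h : y ≠ ω) (hφ : ∀ᶠ t in 𝓝 ‖y - ω‖, HasDerivAt φ (φ' t) t)
    (hφ' : HasDerivAt φ' φ'' ‖y - ω‖) :
    lap (fun z => φ ‖z - ω‖) y = φ'' + (N - 1) * φ' ‖y - ω‖ / ‖y - ω‖ := by
  set R := ‖y - ω‖
  have hR : R ≠ 0 := norm_ne_zero_iff.2 (sub_ne_zero.2 h)
  have hpartial : ∀ i : Fin N,
      (fun z => fderiv ℝ (fun z => φ ‖z - ω‖) z (EuclideanSpace.single i 1)) =ᶠ[𝓝 y]
        fun z => φ' ‖z - ω‖ / ‖z - ω‖ * (z - ω) i := by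
    intro i
    have hnear : ∀ᶠ z in 𝓝 y, HasDerivAt φ (φ' ‖z - ω‖) ‖z - ω‖ :=
      ((continuous_id.sub continuous_const).norm.tendsto y).eventually hφ
    filter_upwards [hnear, eventually_ne_nhds h] with z hz hzω
    rw [(hz.hasFDerivAt_comp_norm_sub hzω).fderiv]
    simp [EuclideanSpace.inner_single_right]
  have hg : HasDerivAt (fun t => φ' t / t) ((φ'' * R - φ' R * 1) / R ^ 2) R :=
    hφ'.div (hasDerivAt_id R) hR
  have hsecond : ∀ i : Fin N,
      fderiv ℝ (fun z => fderiv ℝ (fun z => φ ‖z - ω‖) z (EuclideanSpace.single i 1)) y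
        (EuclideanSpace.single i 1) =
      φ' R / R + (φ'' * R - φ' R) / R ^ 2 / R * (y - ω) i ^ 2 := by
    intro i
    have hprod : HasFDerivAt (fun z => φ' ‖z - ω‖ / ‖z - ω‖ * (z - ω) i) _ y :=
      (hg.hasFDerivAt_comp_norm_sub h).mul (hasFDerivAt_coord_sub ω y i)
    rw [(hpartial i).fderiv_eq, hprod.fderiv]
    simp only [add_apply, smul_apply, PiLp.proj_apply,
      PiLp.single_eq_same, coe_innerSL_apply, EuclideanSpace.inner_single_right,
      Real.ringHom_apply, PiLp.sub_apply, smul_eq_mul]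
    ring
  have hsum : ∑ i : Fin N, (y - ω) i ^ 2 = R ^ 2 := (EuclideanSpace.real_norm_sq_eq _).symm
  simp only [lap, hsecond, Finset.sum_add_distrib, ← Finset.mul_sum, hsum, Finset.sum_const,
    Finset.card_univ, Fintype.card_fin, nsmul_eq_mul]
  field_simp
  ring

end Laplacian

theorem hasDerivAt_const_sub_rpow {c t : ℝ} (α : ℝ) (ht : t < c) :
    HasDerivAt (fun s => (c - s) ^ α) (-(α * (c - t) ^ (α - 1))) t := by
  simpa using ((hasDerivAt_id t).const_sub c).rpow_const (p := α) (Or.inl (sub_pos.2 ht).ne')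

theorem barrier_residual_nonneg {N q A τ r' R α : ℝ} (hα : α = (q - 2) / (q - 1))
    (hN : 1 ≤ N) (hq1 : 1 < q) (hq2 : q < 2) (hA : 0 < A) (hτ : 0 < τ) (hτR : τ ≤ R)
    (hRr : R < r')
    (hA2 : 1 / (q - 1) - 1 + N + (N - 1) * r' / τ ≤ ((2 - q) * A / (q - 1)) ^ (q - 1)) :
    0 ≤ -(A * (α * ((α - 1) * (r' - R) ^ (α - 2))) +
        (N - 1) * -(A * (α * (r' - R) ^ (α - 1))) / R) +
      |-(A * (α * (r' - R) ^ (α - 1)))| ^ q := by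
  have hq : 0 < q - 1 := by linarith
  set C := (2 - q) * A / (q - 1) with hC
  have hCpos : 0 < C := div_pos (mul_pos (by linarith) hA) hq
  set X := r' - R
  have hX : 0 < X := by linarith
  have hR : 0 < R := hτ.trans_le hτR
  have hφ' : -(A * (α * X ^ (α - 1))) = C * X ^ (α - 1) := by
    rw [hα, hC]; field_simp; ring
  have hφ'' : A * (α * ((α - 1) * X ^ (α - 2))) = C / (q - 1) * X ^ (α - 2) := by
    rw [hα, hC]; field_simp; ring
  have hpow : X ^ (α - 1) = X ^ (α - 2) * X := by
    rw [← Real.rpow_add_one hX.ne']; ring_nf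
  have hgrad : |C * X ^ (α - 1)| ^ q = C ^ (q - 1) * C * X ^ (α - 2) := by
    have hexp : (α - 1) * q = α - 2 := by rw [hα]; field_simp; ring
    rw [abs_of_pos (by positivity), Real.mul_rpow hCpos.le (by positivity),
      ← Real.rpow_mul hX.le, hexp, ← Real.rpow_add_one hCpos.ne', sub_add_cancel]
  have hratio : X / R ≤ r' / τ := div_le_div₀ (by linarith) (by linarith) hτ hτR
  have key : 1 / (q - 1) + (N - 1) * (X / R) ≤ C ^ (q - 1) := by
    have := mul_le_mul_of_nonneg_left hratio (by linarith : (0 : ℝ) ≤ N - 1)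
    rw [mul_div_assoc] at hA2
    linarith
  have hfactor : -(C / (q - 1) * X ^ (α - 2) + (N - 1) * (C * (X ^ (α - 2) * X)) / R) +
      C ^ (q - 1) * C * X ^ (α - 2) =
      C * X ^ (α - 2) * (C ^ (q - 1) - (1 / (q - 1) + (N - 1) * (X / R))) := by
    field_simp; ring
  rw [hφ', hφ'', hgrad, hpow, hfactor]
  exact mul_nonneg (by positivity) (by linarith)

theorem local_barrier_supersolution_general
    (N : ℕ) (hN : 2 ≤ N) (q : ℝ) (hq1 : 1 < q) (hq2 : q < 2)
    (ω : EuclideanSpace ℝ (Fin N)) (τ r' B : ℝ) (hτ : 0 < τ)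
    (A : ℝ) (hA : 0 < A)
    (hA2 : 1 / (q - 1) - 1 + N + (N - 1) * r' / τ ≤ ((2 - q) * A / (q - 1)) ^ (q - 1)) :
    ContDiffOn ℝ 2
      (fun y : EuclideanSpace ℝ (Fin N) => A * (r' - ‖y - ω‖) ^ ((q - 2) / (q - 1)) - B)
      {y : EuclideanSpace ℝ (Fin N) | τ < ‖y - ω‖ ∧ ‖y - ω‖ < r'} ∧
    ∀ y : EuclideanSpace ℝ (Fin N), τ < ‖y - ω‖ → ‖y - ω‖ < r' →
      0 ≤ -lap (fun y : EuclideanSpace ℝ (Fin N) =>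
              A * (r' - ‖y - ω‖) ^ ((q - 2) / (q - 1)) - B) y
        + ‖gradient (fun y : EuclideanSpace ℝ (Fin N) =>
              A * (r' - ‖y - ω‖) ^ ((q - 2) / (q - 1)) - B) y‖ ^ q := by
  set α := (q - 2) / (q - 1) with hα
  refine ⟨?_, fun y hτy hyr => ?_⟩
  · exact ((contDiffOn_const.mul (contDiffOn_const_sub_norm_sub_rpow r' α ω)).sub
      contDiffOn_const).mono fun y hy => ⟨hτ.trans hy.1, hy.2⟩
  have hyω : y ≠ ω := fun h => by simp [h] at hτy; linarith
  have hφ : ∀ t < r', HasDerivAt (fun t => A * (r' - t) ^ α - B)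
      (-(A * (α * (r' - t) ^ (α - 1)))) t := fun t ht => by
    simpa using ((hasDerivAt_const_sub_rpow α ht).const_mul A).sub_const B
  have hφ' : HasDerivAt (fun t => -(A * (α * (r' - t) ^ (α - 1))))
      (A * (α * ((α - 1) * (r' - ‖y - ω‖) ^ (α - 2)))) ‖y - ω‖ := by
    simpa [sub_sub, one_add_one_eq_two] using
      (((hasDerivAt_const_sub_rpow (α - 1) hyr).const_mul α).const_mul A).fun_neg
  rw [lap_comp_norm_sub hyω ((eventually_lt_nhds hyr).mono hφ) hφ',
    (hφ _ hyr).norm_gradient_comp_norm_sub hyω]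
  exact barrier_residual_nonneg hα (by exact_mod_cast hN.trans' one_le_two) hq1 hq2 hA hτ
    hτy.le hyr hA2

/-- The local barrier `v(y) = A (r′ − ‖y−ω‖)^{(q−2)/(q−1)} − B` is a `C²` supersolution of
`−Δv + |∇v|^q = 0` on the annulus `{τ < ‖y−ω‖ < r′}`, provided
`1/(q−1) − 1 + N + (N−1) r′/τ ≤ ((2−q)A/(q−1))^{q−1}`. -/
theorem local_barrier_supersolution
    (N : ℕ) (hN : 2 ≤ N) (q : ℝ) (hq1 : 1 < q) (hq2 : q < 2)
    (ω : EuclideanSpace ℝ (Fin N)) (τ r' B : ℝ) (hτ : 0 < τ) (hτr : τ < r')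
    (A : ℝ) (hA : 0 < A)
    (hA2 : 1 / (q - 1) - 1 + N + (N - 1) * r' / τ ≤ ((2 - q) * A / (q - 1)) ^ (q - 1)) :
    ContDiffOn ℝ 2
      (fun y : EuclideanSpace ℝ (Fin N) => A * (r' - ‖y - ω‖) ^ ((q - 2) / (q - 1)) - B)
      {y : EuclideanSpace ℝ (Fin N) | τ < ‖y - ω‖ ∧ ‖y - ω‖ < r'} ∧
    ∀ y : EuclideanSpace ℝ (Fin N), τ < ‖y - ω‖ → ‖y - ω‖ < r' →
      0 ≤ -lap (fun y : EuclideanSpace ℝ (Fin N) =>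
              A * (r' - ‖y - ω‖) ^ ((q - 2) / (q - 1)) - B) y
        + ‖gradient (fun y : EuclideanSpace ℝ (Fin N) =>
              A * (r' - ‖y - ω‖) ^ ((q - 2) / (q - 1)) - B) y‖ ^ q :=
  local_barrier_supersolution_general N hN q hq1 hq2 ω τ r' B hτ A hA hA2
end

section
/- Let q ≥ 1, 0 ≤ α < 1, and γ < δ* be real numbers, and let u : [γ, δ*] → ℝ be continuously differentiable. Then ( ∫_γ^{δ*} (s−γ)^{−α} |u(s)|^q ds )^{1/q} ≤ ( (δ*−γ)^{1−α}/(1−α) )^{1/q} · |u(δ*)| + (q/(1−α)) · ( ∫_γ^{δ*} (s−γ)^{q−α} |u′(s)|^q ds )^{1/q} (one-dimensional weighted Hardy-type inequality underlying the weighted trace estimates). -/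
open Set MeasureTheory intervalIntegral

/-!
Since `|u|` need not be differentiable, dominate it by the nonincreasing majorant
`w s = |u δ*| + ∫_s^{δ*} |u'|`, whose derivative is `-|u'|`. For `A = ∫ (s-γ)^{-α} w^q`,
integrating by parts against `(s-γ)^{-α} = d/ds ((s-γ)^{1-α}/(1-α))` gives
`A = (δ*-γ)^{1-α}/(1-α) · w(δ*)^q + q/(1-α) ∫ (s-γ)^{1-α} w^{q-1} |u'|`,
and Hölder with exponents `q/(q-1)` and `q` bounds the last integral by
`A^{1-1/q} (∫ (s-γ)^{q-α} |u'|^q)^{1/q}`. An inequality `A ≤ B + K A^{1-1/q}` absorbs into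
`A^{1/q} ≤ B^{1/q} + K`.
-/

namespace MeasureTheory

variable {X : Type*} [MeasurableSpace X] {μ : Measure X} {f g : X → ℝ}

theorem Integrable.memLp_rpow_of_nonneg (hf : Integrable f μ) (hf0 : 0 ≤ᵐ[μ] f) {θ : ℝ}
    (hθ : 0 < θ) : MemLp (fun x ↦ f x ^ θ) (ENNReal.ofReal θ⁻¹) μ := by
  have h := (memLp_one_iff_integrable.2 hf).norm_rpow_div (ENNReal.ofReal θ)
  rw [ENNReal.toReal_ofReal hθ.le, one_div, ← ENNReal.ofReal_inv_of_pos hθ] at h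
  refine h.ae_eq ?_
  filter_upwards [hf0] with x hx
  rw [Real.norm_of_nonneg hx]

theorem integral_rpow_mul_rpow_one_sub_le (hf : Integrable f μ) (hg : Integrable g μ)
    (hf0 : 0 ≤ᵐ[μ] f) (hg0 : 0 ≤ᵐ[μ] g) {θ : ℝ} (hθ0 : 0 ≤ θ) (hθ1 : θ ≤ 1) :
    ∫ x, f x ^ θ * g x ^ (1 - θ) ∂μ ≤ (∫ x, f x ∂μ) ^ θ * (∫ x, g x ∂μ) ^ (1 - θ) := by
  rcases hθ0.eq_or_lt with rfl | hθ0
  · simp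
  rcases hθ1.eq_or_lt with rfl | hθ1
  · simp
  have hθ1' : 0 < 1 - θ := sub_pos.2 hθ1
  have hconj : θ⁻¹.HolderConjugate (1 - θ)⁻¹ :=
    Real.holderConjugate_iff.2 ⟨one_lt_inv_iff₀.2 ⟨hθ0, hθ1⟩, by simp⟩
  have hholder := integral_mul_le_Lp_mul_Lq_of_nonneg hconj
    (hf0.mono fun x hx ↦ Real.rpow_nonneg hx θ) (hg0.mono fun x hx ↦ Real.rpow_nonneg hx _)
    (hf.memLp_rpow_of_nonneg hf0 hθ0) (hg.memLp_rpow_of_nonneg hg0 hθ1')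
  have hinv {h : X → ℝ} (h0 : 0 ≤ᵐ[μ] h) {t : ℝ} (ht : 0 < t) :
      ∫ x, (h x ^ t) ^ t⁻¹ ∂μ = ∫ x, h x ∂μ :=
    integral_congr_ae <| h0.mono fun x hx ↦ Real.rpow_rpow_inv hx ht.ne'
  rwa [hinv hf0 hθ0, hinv hg0 hθ1', one_div, one_div, inv_inv, inv_inv] at hholder

end MeasureTheory

theorem rpow_one_div_le_add_of_le_add_mul_rpow {A B K q : ℝ} (hA : 0 ≤ A) (hB : 0 ≤ B)
    (hK : 0 ≤ K) (hq : 1 ≤ q) (h : A ≤ B + K * A ^ (1 - 1 / q)) :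
    A ^ (1 / q) ≤ B ^ (1 / q) + K := by
  have hq0 : 0 < q := by linarith
  set a := A ^ (1 / q) with ha_def
  have ha : 0 ≤ a := Real.rpow_nonneg hA _
  rcases le_or_gt a K with haK | hKa
  · linarith [Real.rpow_nonneg hB (1 / q)]
  have hA_eq : A = a ^ (q - 1) * a := by
    rw [← Real.rpow_add_one (by linarith), sub_add_cancel, ha_def, ← Real.rpow_mul hA,
      one_div_mul_cancel hq0.ne', Real.rpow_one]
  have hA_pow : A ^ (1 - 1 / q) = a ^ (q - 1) := by
    rw [ha_def, ← Real.rpow_mul hA]; congr 1; field_simp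
  suffices (a - K) ^ q ≤ B by
    rw [one_div]
    linarith [(Real.le_rpow_inv_iff_of_pos (by linarith) hB hq0).2 this]
  calc (a - K) ^ q = (a - K) ^ (q - 1) * (a - K) := by
        rw [← Real.rpow_add_one (by linarith), sub_add_cancel]
    _ ≤ a ^ (q - 1) * (a - K) := by gcongr; linarith
    _ ≤ B := by rw [hA_pow, hA_eq] at h; linarith

theorem intervalIntegrable_sub_rpow_mul {β γ δ : ℝ} {f : ℝ → ℝ} (hβ : -1 < β) (hγδ : γ ≤ δ)
    (hf : ContinuousOn f (Icc γ δ)) :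
    IntervalIntegrable (fun s ↦ (s - γ) ^ β * f s) volume γ δ := by
  have h := (intervalIntegrable_rpow' (a := 0) (b := δ - γ) hβ).comp_sub_right γ
  rw [zero_add, sub_add_cancel] at h
  exact h.mul_continuousOn (by rwa [uIcc_of_le hγδ])

theorem integral_sub_rpow_neg_mul_eq {α γ δ : ℝ} {W W' : ℝ → ℝ} (hα : α < 1) (hγδ : γ ≤ δ)
    (hW : ContinuousOn W (Icc γ δ)) (hW' : ContinuousOn W' (Icc γ δ))
    (hderiv : ∀ s ∈ Ioo γ δ, HasDerivAt W (W' s) s) :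
    (1 - α) * ∫ s in γ..δ, (s - γ) ^ (-α) * W s =
      (δ - γ) ^ (1 - α) * W δ - ∫ s in γ..δ, (s - γ) ^ (1 - α) * W' s := by
  have hα' : 0 < 1 - α := sub_pos.2 hα
  have hweight : ∀ s ∈ Ioo γ δ,
      HasDerivAt (fun s ↦ (s - γ) ^ (1 - α)) ((s - γ) ^ (-α) * (1 - α)) s := by
    intro s hs
    convert ((hasDerivAt_id' s).sub_const γ).rpow_const (p := 1 - α)
      (Or.inl (sub_pos.2 hs.1).ne') using 1
    rw [sub_sub_cancel_left, one_mul, mul_comm]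
  have hparts := integral_mul_deriv_eq_deriv_mul_of_hasDerivAt
    (u := fun s ↦ (s - γ) ^ (1 - α)) (v := W)
    (((continuous_id.sub continuous_const).rpow_const fun _ ↦ Or.inr hα'.le).continuousOn)
    (by rwa [uIcc_of_le hγδ]) (by simpa [hγδ] using hweight) (by simpa [hγδ] using hderiv)
    (intervalIntegrable_sub_rpow_mul (by linarith) hγδ continuousOn_const)
    (hW'.intervalIntegrable_of_Icc hγδ)
  rw [sub_self, Real.zero_rpow hα'.ne', zero_mul, sub_zero] at hparts
  rw [hparts, ← intervalIntegral.integral_const_mul]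
  have hcomm : ∫ s in γ..δ, (1 - α) * ((s - γ) ^ (-α) * W s) =
      ∫ s in γ..δ, (s - γ) ^ (-α) * (1 - α) * W s :=
    integral_congr fun s _ ↦ by ring
  rw [hcomm, sub_sub_cancel]

theorem integral_sub_rpow_mul_rpow_mul_le {q α γ δ : ℝ} {w g : ℝ → ℝ} (hq : 1 ≤ q) (hα : α < 1)
    (hγδ : γ ≤ δ) (hw : ContinuousOn w (Icc γ δ)) (hg : ContinuousOn g (Icc γ δ))
    (hw0 : ∀ s ∈ Icc γ δ, 0 ≤ w s) (hg0 : ∀ s ∈ Icc γ δ, 0 ≤ g s) :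
    ∫ s in γ..δ, (s - γ) ^ (1 - α) * w s ^ (q - 1) * g s ≤
      (∫ s in γ..δ, (s - γ) ^ (-α) * w s ^ q) ^ (1 - 1 / q) *
        (∫ s in γ..δ, (s - γ) ^ (q - α) * g s ^ q) ^ (1 / q) := by
  have hq0 : 0 < q := by linarith
  have hsplit {x a b : ℝ} (hx : 0 < x) (ha : 0 ≤ a) (hb : 0 ≤ b) :
      (x ^ (-α) * a ^ q) ^ (1 - 1 / q) * (x ^ (q - α) * b ^ q) ^ (1 / q) =
        x ^ (1 - α) * a ^ (q - 1) * b := by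
    rw [Real.mul_rpow (by positivity) (by positivity),
      Real.mul_rpow (by positivity) (by positivity), ← Real.rpow_mul hx.le, ← Real.rpow_mul ha,
      ← Real.rpow_mul hx.le, ← Real.rpow_mul hb,
      mul_one_div_cancel hq0.ne', Real.rpow_one, show q * (1 - 1 / q) = q - 1 by field_simp,
      show x ^ (1 - α) = x ^ (-α * (1 - 1 / q)) * x ^ ((q - α) * (1 / q)) by
        rw [← Real.rpow_add hx]; congr 1; field_simp; ring]
    ring
  have hpow {f : ℝ → ℝ} (hf : ContinuousOn f (Icc γ δ)) :
      ContinuousOn (fun s ↦ f s ^ q) (Icc γ δ) :=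
    hf.rpow_const fun _ _ ↦ Or.inr hq0.le
  have hint {β : ℝ} (hβ : -1 < β) {f : ℝ → ℝ} (hf : ContinuousOn f (Icc γ δ)) :=
    (intervalIntegrable_iff_integrableOn_Ioc_of_le hγδ).1
      (intervalIntegrable_sub_rpow_mul hβ hγδ (hpow hf))
  have hnonneg {β : ℝ} {f : ℝ → ℝ} (hf0 : ∀ s ∈ Icc γ δ, 0 ≤ f s) :
      0 ≤ᵐ[volume.restrict (Ioc γ δ)] fun s ↦ (s - γ) ^ β * f s ^ q :=
    ae_restrict_of_forall_mem measurableSet_Ioc fun s hs ↦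
      mul_nonneg (Real.rpow_nonneg (sub_nonneg.2 hs.1.le) _)
        (Real.rpow_nonneg (hf0 s (Ioc_subset_Icc_self hs)) _)
  have holder := integral_rpow_mul_rpow_one_sub_le (hint (β := -α) (by linarith) hw)
    (hint (β := q - α) (by linarith) hg) (hnonneg hw0) (hnonneg hg0)
    (sub_nonneg.2 (div_le_one_of_le₀ hq hq0.le))
    (sub_le_self _ (by positivity))
  rw [sub_sub_cancel] at holder
  simp only [integral_of_le hγδ]
  refine le_of_eq_of_le (setIntegral_congr_fun measurableSet_Ioc fun s hs ↦ ?_) holder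
  exact (hsplit (sub_pos.2 hs.1) (hw0 s (Ioc_subset_Icc_self hs))
    (hg0 s (Ioc_subset_Icc_self hs))).symm

theorem integral_sub_rpow_neg_mul_rpow_eq {q α γ δ : ℝ} {w g : ℝ → ℝ} (hq : 1 ≤ q) (hα : α < 1)
    (hγδ : γ ≤ δ) (hw : ContinuousOn w (Icc γ δ)) (hg : ContinuousOn g (Icc γ δ))
    (hderiv : ∀ s ∈ Ioo γ δ, HasDerivAt w (-g s) s) :
    ∫ s in γ..δ, (s - γ) ^ (-α) * w s ^ q =
      (δ - γ) ^ (1 - α) / (1 - α) * w δ ^ q +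
        q / (1 - α) * ∫ s in γ..δ, (s - γ) ^ (1 - α) * w s ^ (q - 1) * g s := by
  have hparts := integral_sub_rpow_neg_mul_eq (W := fun s ↦ w s ^ q)
    (W' := fun s ↦ -g s * q * w s ^ (q - 1)) hα hγδ (hw.rpow_const fun _ _ ↦ Or.inr (by linarith))
    ((hg.neg.mul continuousOn_const).mul (hw.rpow_const fun _ _ ↦ Or.inr (by linarith)))
    fun s hs ↦ (hderiv s hs).rpow_const (Or.inr hq)
  have hneg : ∫ s in γ..δ, (s - γ) ^ (1 - α) * (-g s * q * w s ^ (q - 1)) =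
      -(q * ∫ s in γ..δ, (s - γ) ^ (1 - α) * w s ^ (q - 1) * g s) := by
    rw [← intervalIntegral.integral_const_mul, ← intervalIntegral.integral_neg]
    exact integral_congr fun s _ ↦ by ring
  rw [hneg] at hparts
  have hα' : 1 - α ≠ 0 := (sub_pos.2 hα).ne'
  field_simp
  linarith

theorem weighted_hardy_of_hasDerivAt_neg {q α γ δ : ℝ} {w g : ℝ → ℝ} (hq : 1 ≤ q) (hα : α < 1)
    (hγδ : γ ≤ δ) (hw : ContinuousOn w (Icc γ δ)) (hg : ContinuousOn g (Icc γ δ))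
    (hw0 : ∀ s ∈ Icc γ δ, 0 ≤ w s) (hg0 : ∀ s ∈ Icc γ δ, 0 ≤ g s)
    (hderiv : ∀ s ∈ Ioo γ δ, HasDerivAt w (-g s) s) :
    (∫ s in γ..δ, (s - γ) ^ (-α) * w s ^ q) ^ (1 / q) ≤
      ((δ - γ) ^ (1 - α) / (1 - α)) ^ (1 / q) * w δ +
        q / (1 - α) * (∫ s in γ..δ, (s - γ) ^ (q - α) * g s ^ q) ^ (1 / q) := by
  have hq0 : 0 < q := by linarith
  have hα' : 0 < 1 - α := sub_pos.2 hα
  set A := ∫ s in γ..δ, (s - γ) ^ (-α) * w s ^ q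
  set C := ∫ s in γ..δ, (s - γ) ^ (q - α) * g s ^ q
  set D := (δ - γ) ^ (1 - α) / (1 - α)
  have hD : 0 ≤ D := div_nonneg (Real.rpow_nonneg (sub_nonneg.2 hγδ) _) hα'.le
  have hwδ : 0 ≤ w δ := hw0 δ (right_mem_Icc.2 hγδ)
  have hA : 0 ≤ A := integral_nonneg hγδ fun s hs ↦
    mul_nonneg (Real.rpow_nonneg (sub_nonneg.2 hs.1) _) (Real.rpow_nonneg (hw0 s hs) _)
  have hC : 0 ≤ C := integral_nonneg hγδ fun s hs ↦
    mul_nonneg (Real.rpow_nonneg (sub_nonneg.2 hs.1) _) (Real.rpow_nonneg (hg0 s hs) _)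
  have hA_le : A ≤ D * w δ ^ q + q / (1 - α) * C ^ (1 / q) * A ^ (1 - 1 / q) :=
    calc A = D * w δ ^ q + q / (1 - α) *
          ∫ s in γ..δ, (s - γ) ^ (1 - α) * w s ^ (q - 1) * g s :=
        integral_sub_rpow_neg_mul_rpow_eq hq hα hγδ hw hg hderiv
      _ ≤ D * w δ ^ q + q / (1 - α) * (A ^ (1 - 1 / q) * C ^ (1 / q)) := by
        gcongr
        exact integral_sub_rpow_mul_rpow_mul_le hq hα hγδ hw hg hw0 hg0
      _ = _ := by ring
  have hB : (D * w δ ^ q) ^ (1 / q) = D ^ (1 / q) * w δ := by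
    rw [Real.mul_rpow hD (by positivity), one_div, Real.rpow_rpow_inv hwδ hq0.ne']
  rw [← hB]
  exact rpow_one_div_le_add_of_le_add_mul_rpow hA (by positivity) (by positivity) hq hA_le

theorem abs_le_abs_add_integral_abs_deriv {u u' : ℝ → ℝ} {a b : ℝ} (hab : a ≤ b)
    (hu : ContinuousOn u (Icc a b)) (hderiv : ∀ x ∈ Ioo a b, HasDerivAt u (u' x) x)
    (hu' : IntervalIntegrable u' volume a b) : |u a| ≤ |u b| + ∫ t in a..b, |u' t| := by
  have hftc := integral_eq_sub_of_hasDerivAt_of_le hab hu hderiv hu'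
  calc |u a| ≤ |u b| + |u b - u a| := by simpa using abs_sub (u b) (u b - u a)
    _ ≤ |u b| + ∫ t in a..b, |u' t| := by
      rw [← hftc]; gcongr; exact abs_integral_le_integral_abs hab

theorem hasDerivAt_integral_left_of_continuousOn {g : ℝ → ℝ} {a b s : ℝ}
    (hg : ContinuousOn g (Icc a b)) (hs : s ∈ Ioo a b) :
    HasDerivAt (fun x ↦ ∫ t in x..b, g t) (-g s) s :=
  integral_hasDerivAt_left
    ((hg.mono (Icc_subset_Icc hs.1.le le_rfl)).intervalIntegrable_of_Icc hs.2.le)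
    ((hg.mono Ioo_subset_Icc_self).stronglyMeasurableAtFilter isOpen_Ioo s hs)
    ((hg s (Ioo_subset_Icc_self hs)).continuousAt (Icc_mem_nhds hs.1 hs.2))

theorem integral_sub_rpow_mul_rpow_mono {β q γ δ : ℝ} {f h : ℝ → ℝ} (hβ : -1 < β) (hq : 0 ≤ q)
    (hγδ : γ ≤ δ) (hf : ContinuousOn f (Icc γ δ)) (hh : ContinuousOn h (Icc γ δ))
    (hf0 : ∀ s ∈ Icc γ δ, 0 ≤ f s) (hfh : ∀ s ∈ Icc γ δ, f s ≤ h s) :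
    ∫ s in γ..δ, (s - γ) ^ β * f s ^ q ≤ ∫ s in γ..δ, (s - γ) ^ β * h s ^ q := by
  refine integral_mono_on hγδ
    (intervalIntegrable_sub_rpow_mul hβ hγδ (hf.rpow_const fun _ _ ↦ Or.inr hq))
    (intervalIntegrable_sub_rpow_mul hβ hγδ (hh.rpow_const fun _ _ ↦ Or.inr hq)) fun s hs ↦ ?_
  have := sub_nonneg.2 hs.1
  have := hf0 s hs
  gcongr
  exact hfh s hs

theorem weighted_hardy_inequality_general
    (q α γ δs : ℝ) (hq : 1 ≤ q) (hα1 : α < 1) (hγ : γ < δs)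
    (u u' : ℝ → ℝ)
    (hderiv : ∀ s ∈ Set.Icc γ δs, HasDerivWithinAt u (u' s) (Set.Icc γ δs) s)
    (hcont : ContinuousOn u' (Set.Icc γ δs)) :
    (∫ s in γ..δs, (s - γ) ^ (-α) * |u s| ^ q) ^ (1 / q) ≤
      ((δs - γ) ^ (1 - α) / (1 - α)) ^ (1 / q) * |u δs| +
      q / (1 - α) * (∫ s in γ..δs, (s - γ) ^ (q - α) * |u' s| ^ q) ^ (1 / q) := by
  have hu : ContinuousOn u (Icc γ δs) := fun s hs ↦ (hderiv s hs).continuousWithinAt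
  have hu' : ∀ s ∈ Ioo γ δs, HasDerivAt u (u' s) s := fun s hs ↦
    (hderiv s (Ioo_subset_Icc_self hs)).hasDerivAt (Icc_mem_nhds hs.1 hs.2)
  set w : ℝ → ℝ := fun s ↦ |u δs| + ∫ t in s..δs, |u' t|
  have hw : ContinuousOn w (Icc γ δs) := continuousOn_const.add <| by
    simpa [uIcc_of_le hγ.le] using continuousOn_primitive_interval_left
      (hcont.abs.integrableOn_Icc.mono_set (uIcc_of_le hγ.le).subset)
  have hmaj : ∀ s ∈ Icc γ δs, |u s| ≤ w s := fun s hs ↦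
    abs_le_abs_add_integral_abs_deriv hs.2 (hu.mono (Icc_subset_Icc hs.1 le_rfl))
      (fun x hx ↦ hu' x ⟨hs.1.trans_lt hx.1, hx.2⟩)
      ((hcont.mono (Icc_subset_Icc hs.1 le_rfl)).intervalIntegrable_of_Icc hs.2)
  have hw0 : ∀ s ∈ Icc γ δs, 0 ≤ w s := fun s hs ↦ (abs_nonneg _).trans (hmaj s hs)
  calc (∫ s in γ..δs, (s - γ) ^ (-α) * |u s| ^ q) ^ (1 / q)
      ≤ (∫ s in γ..δs, (s - γ) ^ (-α) * w s ^ q) ^ (1 / q) := by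
        gcongr
        · exact integral_nonneg hγ.le fun s hs ↦ by have := sub_nonneg.2 hs.1; positivity
        · exact integral_sub_rpow_mul_rpow_mono (by linarith) (by linarith) hγ.le hu.abs hw
            (fun _ _ ↦ abs_nonneg _) hmaj
    _ ≤ _ := by
        simpa [w] using weighted_hardy_of_hasDerivAt_neg hq hα1 hγ.le hw hcont.abs hw0
          (fun _ _ ↦ abs_nonneg _) fun s hs ↦
            (hasDerivAt_integral_left_of_continuousOn hcont.abs hs).const_add _

/-- One-dimensional weighted Hardy-type inequality: for `q ≥ 1`, `0 ≤ α < 1`, `γ < δ*` and a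
continuously differentiable `u` on `[γ, δ*]`,
`(∫_γ^{δ*} (s−γ)^{−α} |u|^q)^{1/q} ≤ ((δ*−γ)^{1−α}/(1−α))^{1/q} |u(δ*)|
  + (q/(1−α)) (∫_γ^{δ*} (s−γ)^{q−α} |u′|^q)^{1/q}`. -/
theorem weighted_hardy_inequality
    (q α γ δs : ℝ) (hq : 1 ≤ q) (hα0 : 0 ≤ α) (hα1 : α < 1) (hγ : γ < δs)
    (u u' : ℝ → ℝ)
    (hderiv : ∀ s ∈ Set.Icc γ δs, HasDerivWithinAt u (u' s) (Set.Icc γ δs) s)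
    (hcont : ContinuousOn u' (Set.Icc γ δs)) :
    (∫ s in γ..δs, (s - γ) ^ (-α) * |u s| ^ q) ^ (1 / q) ≤
      ((δs - γ) ^ (1 - α) / (1 - α)) ^ (1 / q) * |u δs| +
      q / (1 - α) * (∫ s in γ..δs, (s - γ) ^ (q - α) * |u' s| ^ q) ^ (1 / q) :=
  weighted_hardy_inequality_general q α γ δs hq hα1 hγ u u' hderiv hcont
end
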